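/- arXiv:1504.07526 — 2 statements merged into one kernel-verified Lean document; each statement's English description precedes it below -/
import Mathlib

section
/- Let Λ : ℝ^d → ℝ be convex with Λ(0)=0, let I be its conjugate, and let a ∈ Δ^{N-1} be a probability vector. Define Λ̃(λ) = ∑_{j=1}^N Λ(a_j λ) and let Ĩ be the conjugate of Λ̃. Then I(x) ≤ Ĩ(x) ≤ N·I(x) for every x ∈ ℝ^d. -/
/-!
Since `Λ(0) = 0`, convexity gives `Λ(a_j λ) ≤ a_j Λ(λ)`, so `Λ̃ ≤ Λ` and hence `I ≤ Ĩ`.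
Conversely, as `∑ a_j = 1` we may split `⟪λ, x⟫ = ∑ ⟪a_j λ, x⟫`, and then
`⟪λ, x⟫ - Λ̃(λ) = ∑_j (⟪a_j λ, x⟫ - Λ(a_j λ)) ≤ N I(x)`.
-/

open RealInnerProductSpace Set

theorem EReal.coe_finset_sum {ι : Type*} (s : Finset ι) (r : ι → ℝ) :
    ((∑ i ∈ s, r i : ℝ) : EReal) = ∑ i ∈ s, (r i : EReal) :=
  map_sum (⟨⟨((↑) : ℝ → EReal), EReal.coe_zero⟩, EReal.coe_add⟩ : ℝ →+ EReal) r s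

section Convex

variable {E : Type*} [AddCommGroup E] [Module ℝ E] {s : Set E} {f : E → ℝ}

theorem ConvexOn.map_smul_le_of_map_zero_nonpos (hf : ConvexOn ℝ s f) (h0s : (0 : E) ∈ s)
    (h0 : f 0 ≤ 0) {x : E} (hx : x ∈ s) {t : ℝ} (ht0 : 0 ≤ t) (ht1 : t ≤ 1) :
    f (t • x) ≤ t * f x := by
  have h := hf.2 hx h0s ht0 (sub_nonneg.2 ht1) (add_sub_cancel t 1)
  simp only [smul_zero, add_zero, smul_eq_mul] at h
  linarith [mul_nonpos_of_nonneg_of_nonpos (sub_nonneg.2 ht1) h0]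

theorem ConvexOn.sum_map_smul_le_of_map_zero_nonpos {ι : Type*} {t : Finset ι} {w : ι → ℝ}
    (hf : ConvexOn ℝ s f) (h0s : (0 : E) ∈ s) (h0 : f 0 ≤ 0) {x : E} (hx : x ∈ s)
    (hw : ∀ i ∈ t, 0 ≤ w i) (hw1 : ∑ i ∈ t, w i = 1) :
    ∑ i ∈ t, f (w i • x) ≤ f x :=
  calc ∑ i ∈ t, f (w i • x)
      ≤ ∑ i ∈ t, w i * f x := Finset.sum_le_sum fun i hi =>
        hf.map_smul_le_of_map_zero_nonpos h0s h0 hx (hw i hi)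
          (hw1 ▸ Finset.single_le_sum hw hi)
    _ = f x := by rw [← Finset.sum_mul, hw1, one_mul]

end Convex

section Conjugate

variable {E : Type*} [NormedAddCommGroup E] [InnerProductSpace ℝ E]

noncomputable def fenchelConjugate (f : E → ℝ) (x : E) : EReal :=
  ⨆ lam : E, ((⟪lam, x⟫ - f lam : ℝ) : EReal)

theorem coe_inner_sub_le_fenchelConjugate (f : E → ℝ) (lam x : E) :
    ((⟪lam, x⟫ - f lam : ℝ) : EReal) ≤ fenchelConjugate f x :=
  le_iSup (fun lam : E => ((⟪lam, x⟫ - f lam : ℝ) : EReal)) lam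

theorem fenchelConjugate_anti {f g : E → ℝ} (hfg : ∀ lam, f lam ≤ g lam) (x : E) :
    fenchelConjugate g x ≤ fenchelConjugate f x :=
  iSup_mono fun lam => EReal.coe_le_coe_iff.2 (sub_le_sub_left (hfg lam) _)

theorem fenchelConjugate_sum_comp_smul_le {ι : Type*} [Fintype ι] (f : E → ℝ) {w : ι → ℝ}
    (hw1 : ∑ i, w i = 1) (x : E) :
    fenchelConjugate (fun lam => ∑ i, f (w i • lam)) x
      ≤ (Fintype.card ι : EReal) * fenchelConjugate f x := by
  refine iSup_le fun lam => ?_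
  have hsplit : ⟪lam, x⟫ - ∑ i, f (w i • lam) = ∑ i, (⟪w i • lam, x⟫ - f (w i • lam)) := by
    simp only [Finset.sum_sub_distrib, real_inner_smul_left, ← Finset.sum_mul, hw1, one_mul]
  calc ((⟪lam, x⟫ - ∑ i, f (w i • lam) : ℝ) : EReal)
      = ∑ i, ((⟪w i • lam, x⟫ - f (w i • lam) : ℝ) : EReal) := by
        rw [hsplit, EReal.coe_finset_sum]
    _ ≤ ∑ _i : ι, fenchelConjugate f x :=
        Finset.sum_le_sum fun i _ => coe_inner_sub_le_fenchelConjugate f (w i • lam) x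
    _ = (Fintype.card ι : EReal) * fenchelConjugate f x := by
        rw [Finset.sum_const, Finset.card_univ, EReal.nsmul_eq_mul]

end Conjugate

theorem rate_between_isolation_and_fusion_general {d N : ℕ}
    (Λ : EuclideanSpace ℝ (Fin d) → ℝ)
    (hconv : ConvexOn ℝ Set.univ Λ) (h0 : Λ 0 = 0)
    (a : Fin N → ℝ) (ha : ∀ j, 0 ≤ a j) (hsum : ∑ j, a j = 1)
    (I Itilde : EuclideanSpace ℝ (Fin d) → EReal)
    (hI : ∀ x, I x = ⨆ lam : EuclideanSpace ℝ (Fin d),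
      ((⟪lam, x⟫ - Λ lam : ℝ) : EReal))
    (hItilde : ∀ x, Itilde x = ⨆ lam : EuclideanSpace ℝ (Fin d),
      ((⟪lam, x⟫ - ∑ j, Λ (a j • lam) : ℝ) : EReal))
    (x : EuclideanSpace ℝ (Fin d)) :
    I x ≤ Itilde x ∧ Itilde x ≤ (N : EReal) * I x := by
  obtain rfl : I = fenchelConjugate Λ := funext hI
  obtain rfl : Itilde = fenchelConjugate (fun lam => ∑ j, Λ (a j • lam)) := funext hItilde
  have hΛtilde_le : ∀ lam, ∑ j, Λ (a j • lam) ≤ Λ lam := fun lam =>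
    hconv.sum_map_smul_le_of_map_zero_nonpos (mem_univ 0) h0.le (mem_univ lam)
      (fun j _ => ha j) hsum
  refine ⟨fenchelConjugate_anti hΛtilde_le x, ?_⟩
  simpa only [Fintype.card_fin] using fenchelConjugate_sum_comp_smul_le Λ hsum x

theorem rate_between_isolation_and_fusion {d N : ℕ} (hN : 1 ≤ N)
    (Λ : EuclideanSpace ℝ (Fin d) → ℝ)
    (hconv : ConvexOn ℝ Set.univ Λ) (hdiff : Differentiable ℝ Λ) (h0 : Λ 0 = 0)
    (a : Fin N → ℝ) (ha : ∀ j, 0 ≤ a j) (hsum : ∑ j, a j = 1)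
    (I Itilde : EuclideanSpace ℝ (Fin d) → EReal)
    (hI : ∀ x, I x = ⨆ lam : EuclideanSpace ℝ (Fin d),
      ((⟪lam, x⟫ - Λ lam : ℝ) : EReal))
    (hItilde : ∀ x, Itilde x = ⨆ lam : EuclideanSpace ℝ (Fin d),
      ((⟪lam, x⟫ - ∑ j, Λ (a j • lam) : ℝ) : EReal))
    (x : EuclideanSpace ℝ (Fin d)) :
    I x ≤ Itilde x ∧ Itilde x ≤ (N : EReal) * I x :=
  rate_between_isolation_and_fusion_general Λ hconv h0 a ha hsum I Itilde hI hItilde x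
end

section
/- Let Λ_M : ℝ^d → ℝ be convex and differentiable, let θ ∈ ℝ^d satisfy ∇Λ_M(λ) = ∇Λ(λ) + λ/M where Λ is convex differentiable with ∇Λ(0) = θ, and suppose η ∈ ℝ^d satisfies ∇Λ_M(η) = x. Then ‖η‖ ≤ M‖x − θ‖. -/
/-!
Removing the quadratic term, `η` is a point where `Λ` has gradient `x - η / M`. The gradient of a
convex function is monotone (restrict to the segment `[0, η]` and compare both endpoint
derivatives with the slope), so `⟪x - η / M - θ, η⟫ ≥ 0`, i.e.
`‖η‖² / M ≤ ⟪x - θ, η⟫ ≤ ‖x - θ‖ ‖η‖`.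
-/

open RealInnerProductSpace

section

variable {E : Type*} [NormedAddCommGroup E] [InnerProductSpace ℝ E]

theorem HasGradientAt.hasDerivAt_comp_lineMap [CompleteSpace E] {f : E → ℝ} {g a b : E} {t : ℝ}
    (hf : HasGradientAt f g (AffineMap.lineMap a b t)) :
    HasDerivAt (fun s => f (AffineMap.lineMap a b s)) ⟪g, b - a⟫ t := by
  have h := hf.hasFDerivAt.comp_hasDerivAt t AffineMap.hasDerivAt_lineMap
  rwa [InnerProductSpace.toDual_apply_apply] at h

theorem ConvexOn.inner_gradient_le_inner_gradient [CompleteSpace E] {f : E → ℝ}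
    (hf : ConvexOn ℝ Set.univ f) {a b g g' : E} (ha : HasGradientAt f g a)
    (hb : HasGradientAt f g' b) :
    ⟪g, b - a⟫ ≤ ⟪g', b - a⟫ := by
  have hline : ConvexOn ℝ Set.univ (fun t : ℝ => f (AffineMap.lineMap a b t)) := by
    have h := hf.comp_affineMap (AffineMap.lineMap a b)
    rwa [Set.preimage_univ] at h
  have h0 : HasGradientAt f g (AffineMap.lineMap a b (0 : ℝ)) := by simpa using ha
  have h1 : HasGradientAt f g' (AffineMap.lineMap a b (1 : ℝ)) := by simpa using hb
  calc ⟪g, b - a⟫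
      ≤ slope (fun t : ℝ => f (AffineMap.lineMap a b t)) 0 1 :=
        hline.le_slope_of_hasDerivAt trivial trivial zero_lt_one h0.hasDerivAt_comp_lineMap
    _ ≤ ⟪g', b - a⟫ :=
        hline.slope_le_of_hasDerivAt trivial trivial zero_lt_one h1.hasDerivAt_comp_lineMap

theorem hasGradientAt_norm_sq_div [CompleteSpace E] (M : ℝ) (v : E) :
    HasGradientAt (fun w => ‖w‖ ^ 2 / (2 * M)) (M⁻¹ • v) v := by
  rw [hasGradientAt_iff_hasFDerivAt]
  simp only [div_eq_mul_inv]
  refine ((hasStrictFDerivAt_norm_sq v).hasFDerivAt.mul_const (2 * M)⁻¹).congr_fderiv ?_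
  ext w
  simp only [InnerProductSpace.toDual_apply_apply, smul_apply,
    coe_innerSL_apply, real_inner_smul_left, nsmul_eq_mul, Nat.cast_ofNat, smul_eq_mul, mul_inv_rev]
  ring

theorem norm_le_of_norm_sq_div_le_inner {M : ℝ} (hM : 0 < M) {v w : E}
    (h : ‖v‖ ^ 2 / M ≤ ⟪w, v⟫) : ‖v‖ ≤ M * ‖w‖ := by
  have hvw : ‖v‖ ^ 2 ≤ M * ‖w‖ * ‖v‖ := by
    rw [div_le_iff₀ hM] at h
    nlinarith [real_inner_le_norm w v]
  rcases (norm_nonneg v).eq_or_lt with hv0 | hv_pos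
  · rw [← hv0]; positivity
  · nlinarith

end

theorem gradient_preimage_bounded_general {d : ℕ}
    (Λ : EuclideanSpace ℝ (Fin d) → ℝ)
    (hconv : ConvexOn ℝ Set.univ Λ)
    (θ : EuclideanSpace ℝ (Fin d)) (hgrad0 : HasGradientAt Λ θ 0)
    (M : ℝ) (hM : 0 < M)
    (x η : EuclideanSpace ℝ (Fin d))
    (hη : HasGradientAt (fun lam => Λ lam + ‖lam‖ ^ 2 / (2 * M)) x η) :
    ‖η‖ ≤ M * ‖x - θ‖ := by
  have hΛη : HasGradientAt Λ (x - M⁻¹ • η) η := by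
    rw [hasGradientAt_iff_hasFDerivAt, map_sub]
    have h := hη.hasFDerivAt.sub (hasGradientAt_norm_sq_div M η).hasFDerivAt
    simp only [Pi.sub_def, add_sub_cancel_right] at h
    exact h
  have hmono := hconv.inner_gradient_le_inner_gradient hgrad0 hΛη
  rw [sub_zero, inner_sub_left, real_inner_smul_left, real_inner_self_eq_norm_sq] at hmono
  refine norm_le_of_norm_sq_div_le_inner hM ?_
  rw [inner_sub_left, div_eq_inv_mul]
  linarith

theorem gradient_preimage_bounded {d : ℕ}
    (Λ : EuclideanSpace ℝ (Fin d) → ℝ)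
    (hconv : ConvexOn ℝ Set.univ Λ) (hdiff : Differentiable ℝ Λ)
    (θ : EuclideanSpace ℝ (Fin d)) (hgrad0 : HasGradientAt Λ θ 0)
    (M : ℝ) (hM : 0 < M)
    (x η : EuclideanSpace ℝ (Fin d))
    (hη : HasGradientAt (fun lam => Λ lam + ‖lam‖ ^ 2 / (2 * M)) x η) :
    ‖η‖ ≤ M * ‖x - θ‖ :=
  gradient_preimage_bounded_general Λ hconv θ hgrad0 M hM x η hη
end
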